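/- arXiv:1709.03069 — 2 statements merged into one kernel-verified Lean document; each statement's English description precedes it below -/
import Mathlib

section
/- Let X be a finite quandle, R an associative ring with unity, I a two-sided ideal of the quandle ring R[X], and for x₀ ∈ X set X_{I,x₀} := {x ∈ X | x − x₀ ∈ I}. Then: (1) for each x₀ ∈ X, the set X_{I,x₀} is a subquandle of X, i.e., it contains x₀, is closed under the quandle operation, and for all x, y ∈ X_{I,x₀} the unique z ∈ X with z·y = x lies in X_{I,x₀}; (2) the sets X_{I,x} (x ∈ X) partition X: every element of X lies in some X_{I,x}, and for any x₀, y₀ ∈ X the sets X_{I,x₀} and X_{I,y₀} are either equal or disjoint. -/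
variable {X R : Type*}

noncomputable def qmul [Ring R] (op : X → X → X) (u v : X →₀ R) : X →₀ R :=
  u.sum fun x a => v.sum fun y b => Finsupp.single (op x y) (a * b)

noncomputable def XI [Ring R] (I : AddSubgroup (X →₀ R)) (x₀ : X) : Set X :=
  {x : X | Finsupp.single x (1 : R) - Finsupp.single x₀ 1 ∈ I}

lemma qmul_single [Ring R] (op : X → X → X) (x y : X) (a b : R) :
    qmul op (Finsupp.single x a) (Finsupp.single y b) = Finsupp.single (op x y) (a * b) := by
  unfold qmul
  rw [Finsupp.sum_single_index, Finsupp.sum_single_index]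
  · simp
  · simp [Finsupp.sum_single_index]

lemma qmul_sub_left [Ring R] (op : X → X → X) (u v w : X →₀ R) :
    qmul op (u - v) w = qmul op u w - qmul op v w := by
  unfold qmul
  apply Finsupp.sum_sub_index
  intro x a b
  rw [← Finsupp.sum_sub]
  congr 1; ext y c
  rw [sub_mul, Finsupp.single_sub]

lemma qmul_single_sub_right [Ring R] (op : X → X → X) (x : X) (a : R) (v w : X →₀ R) :
    qmul op (Finsupp.single x a) (v - w) =
      qmul op (Finsupp.single x a) v - qmul op (Finsupp.single x a) w := by
  unfold qmul
  rw [Finsupp.sum_single_index, Finsupp.sum_single_index, Finsupp.sum_single_index]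
  · apply Finsupp.sum_sub_index
    intro y b c
    rw [mul_sub, Finsupp.single_sub]
  all_goals simp

theorem stmt_4 [Ring R] [Finite X] (op : X → X → X)
    (hidem : ∀ x, op x x = x)
    (hbij : ∀ y, Function.Bijective fun x => op x y)
    (hdist : ∀ x y z, op (op x y) z = op (op x z) (op y z))
    (I : AddSubgroup (X →₀ R))
    (hI : ∀ u ∈ I, ∀ v : X →₀ R, qmul op u v ∈ I ∧ qmul op v u ∈ I) :
    (∀ x₀ : X,
      x₀ ∈ XI I x₀ ∧
      (∀ x ∈ XI I x₀, ∀ y ∈ XI I x₀, op x y ∈ XI I x₀) ∧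
      (∀ x ∈ XI I x₀, ∀ y ∈ XI I x₀, ∀ z : X, op z y = x → z ∈ XI I x₀)) ∧
    (∀ x : X, x ∈ XI I x) ∧
    (∀ x₀ y₀ : X, XI I x₀ = XI I y₀ ∨ Disjoint (XI I x₀) (XI I y₀)) := by
  have hrefl : ∀ x : X, x ∈ XI I x := by
    intro x
    simp only [XI, Set.mem_setOf_eq, sub_self]
    exact I.zero_mem
  have hclosed : ∀ x₀ : X, ∀ x ∈ XI I x₀, ∀ y ∈ XI I x₀, op x y ∈ XI I x₀ := by
    intro x₀ x hx y hy
    have h1 : qmul op (Finsupp.single x (1:R) - Finsupp.single x₀ 1) (Finsupp.single y 1) ∈ I :=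
      (hI _ hx _).1
    have h2 : qmul op (Finsupp.single x₀ (1:R))
        (Finsupp.single y 1 - Finsupp.single x₀ 1) ∈ I := (hI _ hy _).2
    rw [qmul_sub_left, qmul_single, qmul_single, one_mul] at h1
    rw [qmul_single_sub_right, qmul_single, qmul_single, one_mul, hidem] at h2
    have := I.add_mem h1 h2
    simpa [XI, sub_add_sub_cancel] using this
  refine ⟨fun x₀ => ⟨hrefl x₀, hclosed x₀, ?_⟩, hrefl, ?_⟩
  · -- inverse closure
    intro x hx y hy z hz
    set f : X → X := fun a => op a y with hf
    have hmaps : Set.MapsTo f (XI I x₀) (XI I x₀) := fun a ha => hclosed x₀ a ha y hy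
    have hfin : (XI I x₀).Finite := Set.toFinite _
    have hinj : Set.InjOn f (XI I x₀) := (hbij y).injective.injOn
    have hbijon : Set.BijOn f (XI I x₀) (XI I x₀) :=
      (Set.Finite.injOn_iff_bijOn_of_mapsTo hfin hmaps).1 hinj
    obtain ⟨w, hw, hwx⟩ := hbijon.surjOn hx
    have : w = z := (hbij y).injective (by simpa [hf, hz] using hwx)
    exact this ▸ hw
  · -- partition
    intro x₀ y₀
    by_cases h : ∃ z, z ∈ XI I x₀ ∧ z ∈ XI I y₀
    · left
      obtain ⟨z, hz1, hz2⟩ := h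
      have hxy : Finsupp.single x₀ (1:R) - Finsupp.single y₀ 1 ∈ I := by
        have := I.sub_mem hz2 hz1
        simpa using this
      ext w
      simp only [XI, Set.mem_setOf_eq]
      constructor
      · intro hw
        have := I.add_mem hw hxy
        simpa [sub_add_sub_cancel] using this
      · intro hw
        have := I.sub_mem hw hxy
        simpa [sub_sub_sub_cancel_right] using this
    · right
      rw [Set.disjoint_iff_inter_eq_empty]
      ext z
      simp only [Set.mem_inter_iff, Set.mem_empty_iff_false, iff_false]
      intro ⟨h1, h2⟩
      exact h ⟨z, h1, h2⟩
end

section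
/- Let X be a quandle and R an associative ring with unity. Then Δ_{R°}²(X) = Δ_{R°}(X), i.e., the additive subgroup of the extended quandle ring R°[X] generated by all products u·v with u, v ∈ Δ_{R°}(X) equals Δ_{R°}(X) itself. -/
/-!
Statement 8: Let `X` be a quandle and `R` an associative ring with unity. Then
`Δ_{R°}²(X) = Δ_{R°}(X)`: the additive subgroup of the extended quandle ring
`R°[X] = R ⊕ R[X]` generated by all products of elements of the extended augmentation
ideal equals the extended augmentation ideal itself.

`R°[X]` is modelled as `R × (X →₀ R)` with unity `(1, 0)` and multiplication
`(r, a)(s, b) = (rs, r•b + a•s + ab)`.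
-/

variable {X R : Type*}

/-- Right scalar action of `R` on `X →₀ R` (multiplying each coefficient on the right). -/
noncomputable def rsmul [Ring R] (s : R) (a : X →₀ R) : X →₀ R :=
  a.sum fun x c => Finsupp.single x (c * s)

/-- Multiplication of the extended rack ring `R°[X] = R × R[X]`:
`(r, a)(s, b) = (rs, r•b + a•s + ab)`. -/
noncomputable def emul [Ring R] (op : X → X → X) (u v : R × (X →₀ R)) : R × (X →₀ R) :=
  (u.1 * v.1, u.1 • v.2 + rsmul v.1 u.2 + qmul op u.2 v.2)

/-- The augmentation homomorphism `R[X] → R`, `Σ αᵢ xᵢ ↦ Σ αᵢ`. -/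
noncomputable def augHom [Ring R] : (X →₀ R) →+ R :=
  Finsupp.liftAddHom fun _ => AddMonoidHom.id R

/-- The extended augmentation homomorphism `R°[X] → R`, `(r, a) ↦ r + ε(a)`. -/
noncomputable def eaugHom [Ring R] : (R × (X →₀ R)) →+ R :=
  (AddMonoidHom.id R).coprod augHom

lemma augHom_single [Ring R] (x : X) (c : R) : augHom (Finsupp.single x c) = c := by
  simp [augHom]

lemma augHom_apply [Ring R] (a : X →₀ R) : augHom a = a.sum fun _ c => c := by
  simp [augHom, Finsupp.liftAddHom_apply]
  rfl

lemma aug_smul [Ring R] (r : R) (b : X →₀ R) : augHom (r • b) = r * augHom b := by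
  rw [augHom_apply, augHom_apply, Finsupp.sum_smul_index (fun _ => rfl), Finsupp.mul_sum]

lemma aug_rsmul [Ring R] (s : R) (a : X →₀ R) : augHom (rsmul s a) = augHom a * s := by
  rw [rsmul, map_finsuppSum]
  simp only [augHom_single]
  rw [augHom_apply, Finsupp.sum_mul]

lemma aug_qmul [Ring R] (op : X → X → X) (u v : X →₀ R) :
    augHom (qmul op u v) = augHom u * augHom v := by
  rw [qmul, map_finsuppSum]
  simp only [map_finsuppSum, augHom_single]
  rw [augHom_apply u, augHom_apply v, Finsupp.sum_mul]
  exact Finsupp.sum_congr fun x _ => (Finsupp.mul_sum _ _).symm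

lemma eaug_apply [Ring R] (r : R) (a : X →₀ R) : eaugHom (r, a) = r + augHom a := by
  simp [eaugHom]

lemma eaug_emul [Ring R] (op : X → X → X) (u v : R × (X →₀ R)) :
    eaugHom (emul op u v) = eaugHom u * eaugHom v := by
  obtain ⟨r, a⟩ := u; obtain ⟨s, b⟩ := v
  simp only [emul, eaug_apply, map_add, aug_smul, aug_rsmul, aug_qmul]
  noncomm_ring

theorem stmt_8 [Ring R] (op : X → X → X)
    (hidem : ∀ x, op x x = x)
    (hbij : ∀ y, Function.Bijective fun x => op x y)
    (hdist : ∀ x y z, op (op x y) z = op (op x z) (op y z)) :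
    AddSubgroup.closure
        {w : R × (X →₀ R) | ∃ u v, u ∈ eaugHom.ker ∧ v ∈ eaugHom.ker ∧ w = emul op u v} =
      eaugHom.ker := by
  apply le_antisymm
  · rw [AddSubgroup.closure_le]
    rintro w ⟨u, v, hu, hv, rfl⟩
    simp only [SetLike.mem_coe, AddMonoidHom.mem_ker] at *
    rw [eaug_emul, hu, hv, mul_zero]
  · intro w hw
    obtain ⟨r, a⟩ := w
    rw [AddMonoidHom.mem_ker, eaug_apply] at hw
    have key : ∀ (x : X) (α : R),
        ((-α, Finsupp.single x α) : R × (X →₀ R)) ∈ AddSubgroup.closure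
          {w : R × (X →₀ R) | ∃ u v, u ∈ eaugHom.ker ∧ v ∈ eaugHom.ker ∧ w = emul op u v} := by
      intro x α
      have hmem : ∀ β : R, ((-β, Finsupp.single x β) : R × (X →₀ R)) ∈ eaugHom.ker := by
        intro β
        rw [AddMonoidHom.mem_ker, eaug_apply, augHom_single, neg_add_cancel]
      have hprod : emul op ((-α, Finsupp.single x α) : R × (X →₀ R)) (-1, Finsupp.single x 1)
          = -(-α, Finsupp.single x α) := by
        refine Prod.ext ?_ ?_
        · simp [emul]
        · simp only [emul, rsmul, qmul]
          rw [Finsupp.sum_single_index (by simp), Finsupp.sum_single_index (by simp),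
            Finsupp.sum_single_index (by simp)]
          simp [Finsupp.smul_single, hidem, Finsupp.single_neg, two_smul]
      have : ((-α, Finsupp.single x α) : R × (X →₀ R)) =
          -(emul op ((-α, Finsupp.single x α) : R × (X →₀ R)) (-1, Finsupp.single x 1)) := by
        rw [hprod, neg_neg]
      rw [this]
      exact AddSubgroup.neg_mem _ (AddSubgroup.subset_closure
        ⟨_, _, hmem α, hmem 1, rfl⟩)
    have hrepr : ((r, a) : R × (X →₀ R)) =
        a.sum fun x α => ((-α, Finsupp.single x α) : R × (X →₀ R)) := by
      refine Prod.ext ?_ ?_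
      · rw [Finsupp.sum, Prod.fst_sum]
        simp only [Finset.sum_neg_distrib]
        have h2 : augHom a = ∑ x ∈ a.support, a x := augHom_apply a
        rw [← h2]
        exact (neg_eq_of_add_eq_zero_left hw).symm
      · rw [Finsupp.sum, Prod.snd_sum]
        exact (Finsupp.sum_single a).symm
    rw [hrepr]
    exact AddSubgroup.sum_mem _ fun x _ => key x (a x)
end
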